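/- arXiv:1910.13898 — 2 statements merged into one kernel-verified Lean document; each statement's English description precedes it below -/
import Mathlib

section
/- Every Stein manifold X, i.e. a complex manifold admitting a proper holomorphic embedding as a closed complex submanifold of some ℂ^N, is 1-Hartogs: every holomorphic map from the Hartogs figure H₁¹(r) to X extends to a holomorphic map from Δ² to X. (It suffices to assume the Hartogs extension theorem for scalar holomorphic functions on H₁¹(r) and that X is a closed submanifold of ℂ^N.) -/
open Metric

/-- The 1-concave Hartogs figure `H₁¹(r) = (Δ × Δ(r)) ∪ (A_{1-r,1} × Δ) ⊂ ℂ²`. -/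
def hartogsFig (r : ℝ) : Set (ℂ × ℂ) :=
  (ball (0 : ℂ) 1 ×ˢ ball (0 : ℂ) r) ∪
    ((ball (0 : ℂ) 1 \ closure (ball (0 : ℂ) (1 - r))) ×ˢ ball (0 : ℂ) 1)

/-- The open unit bidisc `Δ² ⊂ ℂ²`. -/
def bidisc : Set (ℂ × ℂ) := ball (0 : ℂ) 1 ×ˢ ball (0 : ℂ) 1

open Set

/-!
The coordinates of `f` extend by scalar Hartogs extension, giving `F : Δ² → ℂ^N`. For an
equation `g` of `X`, the function `g ∘ F` is holomorphic on `Δ²` and vanishes on the annular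
part `A_{1-r,1} × Δ` of the Hartogs figure; on each slice `Δ × {w}` it thus vanishes on a
nonempty open set, hence everywhere by the identity theorem. So `F` takes values in `X`.
-/

theorem exists_differentiableOn_pi_extension {𝕜 E ι : Type*} [NontriviallyNormedField 𝕜]
    [NormedAddCommGroup E] [NormedSpace 𝕜 E] [Fintype ι] {U V : Set E}
    (hext : ∀ g : E → 𝕜, DifferentiableOn 𝕜 g U →
      ∃ g' : E → 𝕜, DifferentiableOn 𝕜 g' V ∧ EqOn g' g U)
    {f : E → ι → 𝕜} (hf : DifferentiableOn 𝕜 f U) :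
    ∃ F : E → ι → 𝕜, DifferentiableOn 𝕜 F V ∧ EqOn F f U := by
  choose F hF hFf using fun i => hext (fun z => f z i) (differentiableOn_pi.1 hf i)
  exact ⟨fun z i => F i z, differentiableOn_pi.2 hF, fun z hz => funext fun i => hFf i hz⟩

theorem nonempty_ball_diff_closure_ball {r : ℝ} (hr : 0 < r) :
    (ball (0 : ℂ) 1 \ closure (ball 0 (1 - r))).Nonempty := by
  set t : ℝ := 1 - min r 1 / 2 with htdef
  have hr' : 0 < min r 1 := lt_min hr one_pos
  have ht : ‖(t : ℂ)‖ = t := by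
    rw [Complex.norm_real, Real.norm_of_nonneg (by rw [htdef]; linarith [min_le_right r 1])]
  refine ⟨t, ?_, fun ht' => ?_⟩
  · rw [mem_ball_zero_iff, ht, htdef]
    linarith
  · have := mem_closedBall_zero_iff.1 (closure_ball_subset_closedBall ht')
    rw [ht, htdef] at this
    linarith [min_le_left r 1]

variable {E : Type*} [NormedAddCommGroup E] [NormedSpace ℂ E] [CompleteSpace E]

theorem eqOn_zero_ball_of_eqOn_zero_annulus {r : ℝ} (hr : 0 < r) {φ : ℂ → E}
    (hφ : DifferentiableOn ℂ φ (ball 0 1))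
    (hφ0 : EqOn φ 0 (ball 0 1 \ closure (ball 0 (1 - r)))) : EqOn φ 0 (ball 0 1) := by
  obtain ⟨u, hu⟩ := nonempty_ball_diff_closure_ball hr
  have hopen : IsOpen (ball (0 : ℂ) 1 \ closure (ball 0 (1 - r))) :=
    isOpen_ball.sdiff isClosed_closure
  exact (hφ.analyticOnNhd isOpen_ball).eqOn_zero_of_preconnected_of_eventuallyEq_zero
    (convex_ball 0 1).isPreconnected hu.1 (Filter.eventuallyEq_of_mem (hopen.mem_nhds hu) hφ0)

theorem eqOn_zero_bidisc_of_eqOn_zero_hartogsFig {r : ℝ} (hr : 0 < r) {h : ℂ × ℂ → E}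
    (hh : DifferentiableOn ℂ h bidisc) (hh0 : EqOn h 0 (hartogsFig r)) : EqOn h 0 bidisc := by
  rintro ⟨z, w⟩ ⟨hz, hw⟩
  have hslice : DifferentiableOn ℂ (fun u => h (u, w)) (ball 0 1) :=
    hh.comp (differentiableOn_id.prodMk (differentiableOn_const w)) fun u hu => ⟨hu, hw⟩
  exact eqOn_zero_ball_of_eqOn_zero_annulus hr hslice (fun u hu => hh0 (Or.inr ⟨hu, hw⟩)) hz

theorem stein_is_one_hartogs_general (r : ℝ) (hr0 : 0 < r) (N : ℕ)
    (X : Set (Fin N → ℂ)) (G : Set ((Fin N → ℂ) → ℂ))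
    (hG : ∀ g ∈ G, Differentiable ℂ g) (hXG : X = {z | ∀ g ∈ G, g z = 0})
    (hHartogs : ∀ g : ℂ × ℂ → ℂ, DifferentiableOn ℂ g (hartogsFig r) →
      ∃ g' : ℂ × ℂ → ℂ, DifferentiableOn ℂ g' bidisc ∧ Set.EqOn g' g (hartogsFig r))
    (f : ℂ × ℂ → Fin N → ℂ) (hf : DifferentiableOn ℂ f (hartogsFig r))
    (hfX : ∀ z ∈ hartogsFig r, f z ∈ X) :
    ∃ F : ℂ × ℂ → Fin N → ℂ, DifferentiableOn ℂ F bidisc ∧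
      Set.EqOn F f (hartogsFig r) ∧ ∀ z ∈ bidisc, F z ∈ X := by
  obtain ⟨F, hF, hFf⟩ := exists_differentiableOn_pi_extension hHartogs hf
  refine ⟨F, hF, hFf, fun z hz => ?_⟩
  subst hXG
  intro g hg
  have hgF0 : EqOn (g ∘ F) 0 (hartogsFig r) := fun w hw => by
    simpa [Function.comp_apply, hFf hw] using hfX w hw g hg
  exact eqOn_zero_bidisc_of_eqOn_zero_hartogsFig hr0
    ((hG g hg).comp_differentiableOn hF) hgF0 hz

/-- Every Stein manifold is 1-Hartogs.  Here the Stein manifold `X` is realized as a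
closed complex submanifold of `ℂ^N`, globally cut out by a family `G` of entire
functions, and we assume the classical Hartogs extension theorem for scalar holomorphic
functions on `H₁¹(r)`.  Then every holomorphic map `f : H₁¹(r) → X ⊂ ℂ^N` extends to a
holomorphic map `F : Δ² → X`. -/
theorem stein_is_one_hartogs (r : ℝ) (hr0 : 0 < r) (hr1 : r < 1) (N : ℕ)
    (X : Set (Fin N → ℂ)) (G : Set ((Fin N → ℂ) → ℂ))
    (hG : ∀ g ∈ G, Differentiable ℂ g) (hXG : X = {z | ∀ g ∈ G, g z = 0})
    (hXclosed : IsClosed X)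
    (hHartogs : ∀ g : ℂ × ℂ → ℂ, DifferentiableOn ℂ g (hartogsFig r) →
      ∃ g' : ℂ × ℂ → ℂ, DifferentiableOn ℂ g' bidisc ∧ Set.EqOn g' g (hartogsFig r))
    (f : ℂ × ℂ → Fin N → ℂ) (hf : DifferentiableOn ℂ f (hartogsFig r))
    (hfX : ∀ z ∈ hartogsFig r, f z ∈ X) :
    ∃ F : ℂ × ℂ → Fin N → ℂ, DifferentiableOn ℂ F bidisc ∧
      Set.EqOn F f (hartogsFig r) ∧ ∀ z ∈ bidisc, F z ∈ X :=
  stein_is_one_hartogs_general r hr0 N X G hG hXG hHartogs f hf hfX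
end

section
/- The Riemann sphere ℙ¹ is not 1-Hartogs: the holomorphic map H₁¹(r) → ℙ¹ given by (z₁,z₂) ↦ [z₁ - a : z₂ - b] for a suitable point (a,b) ∈ Δ² \ H₁¹(r) (e.g. a = b = 0 after translating the figure so that 0 ∉ H₁¹(r), or equivalently (z₁,z₂) ↦ [z₁ : z₂ - 1/2] with 1/2 chosen so that (0,1/2) ∉ H₁¹(r)) does not extend to a holomorphic map Δ² → ℙ¹. -/
/-!
On the horizontal slice `z₂ = 1/2` the map is `[z₁ : 0] = [1 : 0]` near the annulus, and on the
vertical slice `z₁ = 0` it is `[0 : z₂ - 1/2] = [0 : 1]` near `z₂ = 0`. Restricted to either slice,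
which is a disc through `(0, 1/2)`, an extension is a holomorphic map to `ℙ¹`; the determinant of
two local lifts is holomorphic, so such maps obey the identity theorem and the extension is
constant on each slice. Its value at `(0, 1/2)` would then be both `[1 : 0]` and `[0 : 1]`.
-/

open Metric

open Filter Set Topology Projectivization
open scoped LinearAlgebra.Projectivization

lemma Projectivization.mk_eq_mk_iff_det_eq_zero {K : Type*} [Field K] {v w : Fin 2 → K}
    (hv : v ≠ 0) (hw : w ≠ 0) :
    mk K v hv = mk K w hw ↔ v 0 * w 1 - v 1 * w 0 = 0 := by
  rw [← not_iff_not, mk_eq_mk_iff', not_exists, ← LinearIndependent.pair_iff' hw]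
  change LinearIndependent K (Matrix.of ![w, v]).row ↔ _
  rw [Matrix.linearIndependent_rows_iff_isUnit, Matrix.isUnit_iff_isUnit_det, isUnit_iff_ne_zero,
    Matrix.det_fin_two, not_iff_not]
  simp only [Matrix.of_apply, Matrix.cons_val_zero, Matrix.cons_val_one]
  constructor <;> intro h <;> linear_combination -h

section LocalLifts

variable {E E' V : Type*} [NormedAddCommGroup E] [NormedSpace ℂ E]
  [NormedAddCommGroup E'] [NormedSpace ℂ E'] [NormedAddCommGroup V] [NormedSpace ℂ V]

def HasLocalHolomorphicLiftsOn (F : E → ℙ ℂ V) (s : Set E) : Prop :=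
  ∀ p ∈ s, ∃ U : Set E, IsOpen U ∧ p ∈ U ∧
    ∃ G : E → V, DifferentiableOn ℂ G (U ∩ s) ∧ ∀ z ∈ U ∩ s, ∃ h : G z ≠ 0, F z = mk ℂ (G z) h

lemma hasLocalHolomorphicLiftsOn_const (P : ℙ ℂ V) (s : Set E) :
    HasLocalHolomorphicLiftsOn (fun _ ↦ P) s :=
  fun _ _ ↦ ⟨univ, isOpen_univ, mem_univ _, fun _ ↦ P.rep, differentiableOn_const _,
    fun _ _ ↦ ⟨P.rep_nonzero, P.mk_rep.symm⟩⟩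

lemma HasLocalHolomorphicLiftsOn.comp {F : E → ℙ ℂ V} {s : Set E} {γ : E' → E} {t : Set E'}
    (hF : HasLocalHolomorphicLiftsOn F s) (ht : IsOpen t) (hγ : DifferentiableOn ℂ γ t)
    (hγs : MapsTo γ t s) : HasLocalHolomorphicLiftsOn (F ∘ γ) t := by
  intro p hp
  obtain ⟨U, hU, hpU, G, hG, hFG⟩ := hF (γ p) (hγs hp)
  have hmaps : MapsTo γ ((t ∩ γ ⁻¹' U) ∩ t) (U ∩ s) := fun z hz ↦ ⟨hz.1.2, hγs hz.2⟩
  exact ⟨t ∩ γ ⁻¹' U, hγ.continuousOn.isOpen_inter_preimage ht hU, ⟨hp, hpU⟩, G ∘ γ,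
    hG.comp (hγ.mono inter_subset_right) hmaps, fun z hz ↦ hFG (γ z) (hmaps hz)⟩

end LocalLifts

section IdentityTheorem

variable {F₁ F₂ : ℂ → ℙ ℂ (Fin 2 → ℂ)} {s : Set ℂ}

lemma HasLocalHolomorphicLiftsOn.exists_ball_eqOn_or_not_eventuallyEq
    (h₁ : HasLocalHolomorphicLiftsOn F₁ s) (h₂ : HasLocalHolomorphicLiftsOn F₂ s) (hs : IsOpen s)
    {z : ℂ} (hz : z ∈ s) :
    ∃ ε > 0, EqOn F₁ F₂ (ball z ε) ∨ ∀ w ∈ ball z ε, ¬ F₁ =ᶠ[𝓝 w] F₂ := by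
  obtain ⟨U₁, hU₁, hzU₁, G₁, hG₁, hFG₁⟩ := h₁ z hz
  obtain ⟨U₂, hU₂, hzU₂, G₂, hG₂, hFG₂⟩ := h₂ z hz
  obtain ⟨ε, hε, hball⟩ := Metric.isOpen_iff.1 ((hU₁.inter hU₂).inter hs) z ⟨⟨hzU₁, hzU₂⟩, hz⟩
  have hsub₁ : ball z ε ⊆ U₁ ∩ s := fun w hw ↦ ⟨(hball hw).1.1, (hball hw).2⟩
  have hsub₂ : ball z ε ⊆ U₂ ∩ s := fun w hw ↦ ⟨(hball hw).1.2, (hball hw).2⟩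
  set d : ℂ → ℂ := fun w ↦ G₁ w 0 * G₂ w 1 - G₁ w 1 * G₂ w 0
  have hd : AnalyticOnNhd ℂ d (ball z ε) := by
    refine DifferentiableOn.analyticOnNhd ?_ isOpen_ball
    have hG₁' := differentiableOn_pi.1 (hG₁.mono hsub₁)
    have hG₂' := differentiableOn_pi.1 (hG₂.mono hsub₂)
    exact ((hG₁' 0).mul (hG₂' 1)).sub ((hG₁' 1).mul (hG₂' 0))
  have hF_iff : ∀ w ∈ ball z ε, F₁ w = F₂ w ↔ d w = 0 := by
    intro w hw
    obtain ⟨_, hF₁w⟩ := hFG₁ w (hsub₁ hw)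
    obtain ⟨_, hF₂w⟩ := hFG₂ w (hsub₂ hw)
    rw [hF₁w, hF₂w, mk_eq_mk_iff_det_eq_zero]
  refine ⟨ε, hε, or_iff_not_imp_right.2 fun hne ↦ ?_⟩
  push Not at hne
  obtain ⟨w, hw, hFw⟩ := hne
  have hdw : d =ᶠ[𝓝 w] 0 := by
    filter_upwards [hFw, isOpen_ball.mem_nhds hw] with x hx hxb
    exact (hF_iff x hxb).1 hx
  exact fun x hx ↦ (hF_iff x hx).2 <|
    hd.eqOn_zero_of_preconnected_of_eventuallyEq_zero (convex_ball z ε).isPreconnected hw hdw hx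

theorem HasLocalHolomorphicLiftsOn.eqOn_of_preconnected_of_eventuallyEq
    (h₁ : HasLocalHolomorphicLiftsOn F₁ s) (h₂ : HasLocalHolomorphicLiftsOn F₂ s) (hs : IsOpen s)
    (hs' : IsPreconnected s) {z₀ : ℂ} (hz₀ : z₀ ∈ s) (hF : F₁ =ᶠ[𝓝 z₀] F₂) : EqOn F₁ F₂ s := by
  set S := {z | F₁ =ᶠ[𝓝 z] F₂}
  have hsS : s ⊆ S := by
    refine hs'.subset_of_closure_inter_subset isOpen_setOfPred_eventually_nhds ⟨z₀, hz₀, hF⟩ ?_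
    rintro z ⟨hzS, hz⟩
    obtain ⟨ε, hε, heq | hne⟩ := h₁.exists_ball_eqOn_or_not_eventuallyEq h₂ hs hz
    · exact eventually_of_mem (ball_mem_nhds z hε) heq
    · obtain ⟨w, hw, hwS⟩ := mem_closure_iff.1 hzS (ball z ε) isOpen_ball (mem_ball_self hε)
      exact absurd hwS (hne w hw)
  exact fun z hz ↦ (hsS hz).self_of_nhds

end IdentityTheorem

lemma exists_eventually_mem_hartogsFig_horizontal {r : ℝ} (hr0 : 0 < r) (hr1 : r < 1) {c : ℂ}
    (hc : ‖c‖ < 1) :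
    ∃ w₀ ∈ ball (0 : ℂ) 1, ∀ᶠ w in 𝓝 w₀, (w, c) ∈ hartogsFig r ∧ w ≠ 0 := by
  set A := ball (0 : ℂ) 1 \ closedBall 0 (1 - r)
  have hw₀ : ((1 - r / 2 : ℝ) : ℂ) ∈ A := by
    simp only [A, Set.mem_sdiff, mem_ball_zero_iff, mem_closedBall_zero_iff, Complex.norm_real,
      Real.norm_eq_abs, abs_of_pos (by linarith : 0 < 1 - r / 2)]
    constructor <;> linarith
  refine ⟨_, hw₀.1, ?_⟩
  filter_upwards [(isOpen_ball.sdiff isClosed_closedBall).mem_nhds hw₀] with w ⟨hw1, hwr⟩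
  refine ⟨Or.inr ⟨⟨hw1, fun hw ↦ hwr (closure_ball_subset_closedBall hw)⟩,
    mem_ball_zero_iff.2 hc⟩, ?_⟩
  rintro rfl
  exact hwr (mem_closedBall_self (by linarith))

lemma eventually_mem_hartogsFig_vertical {r : ℝ} (hr0 : 0 < r) {c : ℂ} (hc : r ≤ ‖c‖) :
    ∀ᶠ w in 𝓝 (0 : ℂ), ((0 : ℂ), w) ∈ hartogsFig r ∧ w ≠ c := by
  filter_upwards [ball_mem_nhds (0 : ℂ) hr0] with w hw
  refine ⟨Or.inl ⟨mem_ball_self one_pos, hw⟩, ?_⟩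
  rintro rfl
  exact (mem_ball_zero_iff.1 hw).not_ge hc

/-- The Riemann sphere `ℙ¹` is not 1-Hartogs: for `0 < r < 1/2` the holomorphic map
`H₁¹(r) → ℙ¹`, `(z₁, z₂) ↦ [z₁ : z₂ - 1/2]` (well defined since `(0,1/2) ∉ H₁¹(r)`),
admits no extension to a map `F : Δ² → ℙ¹` which is holomorphic in the sense that it
locally lifts to nonvanishing holomorphic maps into `ℂ² \ {0}`. -/
theorem riemann_sphere_not_one_hartogs (r : ℝ) (hr0 : 0 < r) (hr12 : r < 1 / 2) :
    ¬ ∃ F : ℂ × ℂ → Projectivization ℂ (Fin 2 → ℂ),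
      (∀ p ∈ bidisc, ∃ U : Set (ℂ × ℂ), IsOpen U ∧ p ∈ U ∧
        ∃ G : ℂ × ℂ → Fin 2 → ℂ, DifferentiableOn ℂ G (U ∩ bidisc) ∧
          ∀ z ∈ U ∩ bidisc, ∃ h : G z ≠ 0, F z = Projectivization.mk ℂ (G z) h) ∧
      (∀ z ∈ hartogsFig r,
        ∀ h : (fun i : Fin 2 => if i = 0 then z.1 else z.2 - 1 / 2) ≠ 0,
          F z = Projectivization.mk ℂ (fun i : Fin 2 => if i = 0 then z.1 else z.2 - 1 / 2) h) := by
  rintro ⟨F, hF, hF_eq⟩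
  have h_half : (1 / 2 : ℂ) ∈ ball (0 : ℂ) 1 := by simp; norm_num
  set e₀ : ℙ ℂ (Fin 2 → ℂ) := mk ℂ (Pi.single 0 1) (by simp)
  set e₁ : ℙ ℂ (Fin 2 → ℂ) := mk ℂ (Pi.single 1 1) (by simp)
  have hF_hor : HasLocalHolomorphicLiftsOn (fun w ↦ F (w, 1 / 2)) (ball 0 1) :=
    HasLocalHolomorphicLiftsOn.comp (γ := fun w ↦ (w, 1 / 2)) hF isOpen_ball (by fun_prop)
      fun w hw ↦ ⟨hw, h_half⟩
  have hF_ver : HasLocalHolomorphicLiftsOn (fun w ↦ F (0, w)) (ball 0 1) :=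
    HasLocalHolomorphicLiftsOn.comp (γ := fun w ↦ (0, w)) hF isOpen_ball (by fun_prop)
      fun w hw ↦ ⟨mem_ball_self one_pos, hw⟩
  obtain ⟨w₀, hw₀, h_annulus⟩ :=
    exists_eventually_mem_hartogsFig_horizontal hr0 (by linarith) (mem_ball_zero_iff.1 h_half)
  have hF_e₀ : ∀ᶠ w in 𝓝 w₀, F (w, 1 / 2) = e₀ := by
    filter_upwards [h_annulus] with w ⟨hw, hw0⟩
    rw [hF_eq _ hw fun h ↦ hw0 (by simpa using congrFun h 0), mk_eq_mk_iff_det_eq_zero]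
    simp
  have hF_e₁ : ∀ᶠ w in 𝓝 0, F (0, w) = e₁ := by
    filter_upwards [eventually_mem_hartogsFig_vertical hr0 (c := 1 / 2) (by simp; linarith)]
      with w ⟨hw, hw0⟩
    rw [hF_eq _ hw fun h ↦ hw0 (sub_eq_zero.1 (by simpa using congrFun h 1)),
      mk_eq_mk_iff_det_eq_zero]
    simp
  have h₀ : F (0, 1 / 2) = e₀ := hF_hor.eqOn_of_preconnected_of_eventuallyEq
    (hasLocalHolomorphicLiftsOn_const e₀ _) isOpen_ball (convex_ball 0 1).isPreconnected hw₀ hF_e₀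
    (mem_ball_self one_pos)
  have h₁ : F (0, 1 / 2) = e₁ := hF_ver.eqOn_of_preconnected_of_eventuallyEq
    (hasLocalHolomorphicLiftsOn_const e₁ _) isOpen_ball (convex_ball 0 1).isPreconnected
    (mem_ball_self one_pos) hF_e₁ h_half
  have he : e₀ ≠ e₁ := by simp [e₀, e₁, mk_eq_mk_iff_det_eq_zero]
  exact he (h₀.symm.trans h₁)
end
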